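/- Let t > 0, let f be continuous on [0,t], and let g be continuous on [0,t] with ε ≤ g(s) ≤ M for all s ∈ [0,t], where 0<ε≤M. Set G(r) = ∫₀ʳ g(u) du. Then |∫₀ᵗ f(s)·(exp(G(s) - G(t)) - exp(g(t)(s-t))) ds| ≤ (1/ε - 1/M)·max_{s∈[0,t]}|f(s)|. -/

import Mathlib

/-!
For `s ∈ [0, t]` both kernels are exponentials of numbers between `M (s - t)` and `ε (s - t)`:
the exact exponent is `-∫ₛᵗ g`, and `ε ≤ g ≤ M`. Their difference is therefore at most
`exp (ε (s - t)) - exp (M (s - t))`, whose integral over `[0, t]` is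
`(1 - e^{-εt}) / ε - (1 - e^{-Mt}) / M ≤ 1 / ε - 1 / M`.
-/

open Real Set intervalIntegral MeasureTheory

lemma integral_exp_mul_sub (c t : ℝ) (hc : c ≠ 0) :
    ∫ s in (0:ℝ)..t, exp (c * (s - t)) = (1 - exp (-(c * t))) / c := by
  simp_rw [mul_sub]
  rw [integral_comp_mul_sub exp hc, integral_exp, smul_eq_mul]
  simp [div_eq_inv_mul]

lemma integral_exp_mul_sub_sub_exp_mul_sub_le {ε M t : ℝ} (hε : 0 < ε) (hεM : ε ≤ M)
    (ht : 0 ≤ t) :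
    ∫ s in (0:ℝ)..t, (exp (ε * (s - t)) - exp (M * (s - t))) ≤ 1 / ε - 1 / M := by
  have hM : 0 < M := hε.trans_le hεM
  rw [intervalIntegral.integral_sub ((by fun_prop : Continuous _).intervalIntegrable _ _)
    ((by fun_prop : Continuous _).intervalIntegrable _ _), integral_exp_mul_sub ε t hε.ne',
    integral_exp_mul_sub M t hM.ne']
  have : exp (-(M * t)) / M ≤ exp (-(ε * t)) / ε :=
    div_le_div₀ (exp_pos _).le (exp_le_exp.2 (by nlinarith)) hε hεM
  rw [sub_div, sub_div]
  linarith

lemma integral_mem_Icc_of_mem_Icc {g : ℝ → ℝ} {a b ε M : ℝ} (hab : a ≤ b)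
    (hg : IntervalIntegrable g volume a b) (hgIcc : ∀ u ∈ Icc a b, g u ∈ Icc ε M) :
    ∫ u in a..b, g u ∈ Icc (ε * (b - a)) (M * (b - a)) := by
  constructor
  · simpa [mul_comm] using
      integral_mono_on hab intervalIntegrable_const hg fun u hu => (hgIcc u hu).1
  · simpa [mul_comm] using
      integral_mono_on hab hg intervalIntegrable_const fun u hu => (hgIcc u hu).2

lemma integral_sub_integral_mem_Icc {g : ℝ → ℝ} {a s t ε M : ℝ} (hs : s ∈ Icc a t)
    (hg : IntervalIntegrable g volume a t) (hgIcc : ∀ u ∈ Icc a t, g u ∈ Icc ε M) :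
    (∫ u in a..s, g u) - ∫ u in a..t, g u ∈ Icc (M * (s - t)) (ε * (s - t)) := by
  have hgs : IntervalIntegrable g volume a s :=
    hg.mono_set (uIcc_subset_uIcc_left (Icc_subset_uIcc hs))
  have hgst : IntervalIntegrable g volume s t :=
    hg.mono_set (uIcc_subset_uIcc_right (Icc_subset_uIcc hs))
  obtain ⟨hlow, hhigh⟩ := integral_mem_Icc_of_mem_Icc hs.2 hgst
    fun u hu => hgIcc u ⟨hs.1.trans hu.1, hu.2⟩
  rw [integral_interval_sub_left hgs hg, integral_symm]
  constructor <;> linarith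

lemma abs_exp_sub_exp_le {x y a b : ℝ} (hx : x ∈ Icc a b) (hy : y ∈ Icc a b) :
    |exp x - exp y| ≤ exp b - exp a :=
  dist_le_of_mem_Icc (exp_monotone.mapsTo_Icc hx) (exp_monotone.mapsTo_Icc hy)

lemma abs_integral_mul_le {f k w : ℝ → ℝ} {a b F : ℝ} (hab : a ≤ b)
    (hf : ∀ s ∈ Icc a b, |f s| ≤ F) (hk : ∀ s ∈ Icc a b, |k s| ≤ w s)
    (hw : IntervalIntegrable w volume a b) :
    |∫ s in a..b, f s * k s| ≤ F * ∫ s in a..b, w s := by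
  rw [← intervalIntegral.integral_const_mul, ← Real.norm_eq_abs]
  refine norm_integral_le_of_norm_le hab (ae_of_all _ fun s hs => ?_) (hw.const_mul F)
  have hs : s ∈ Icc a b := Ioc_subset_Icc_self hs
  rw [Real.norm_eq_abs, abs_mul]
  exact mul_le_mul (hf s hs) (hk s hs) (abs_nonneg _) ((abs_nonneg _).trans (hf s hs))

theorem dqssa_kernel_freezing_error_bound_general
    (t ε M : ℝ) (ht : 0 < t) (hε : 0 < ε) (f g : ℝ → ℝ)
    (hf : ContinuousOn f (Set.Icc 0 t))
    (hg : ContinuousOn g (Set.Icc 0 t))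
    (hgl : ∀ s ∈ Set.Icc (0:ℝ) t, ε ≤ g s)
    (hgu : ∀ s ∈ Set.Icc (0:ℝ) t, g s ≤ M) :
    |∫ s in (0:ℝ)..t,
        f s * (Real.exp ((∫ u in (0:ℝ)..s, g u) - (∫ u in (0:ℝ)..t, g u))
                - Real.exp (g t * (s - t)))|
      ≤ (1 / ε - 1 / M) * sSup ((fun s => |f s|) '' Set.Icc (0:ℝ) t) := by
  have hgIcc : ∀ u ∈ Icc 0 t, g u ∈ Icc ε M := fun u hu => ⟨hgl u hu, hgu u hu⟩
  have hgt : g t ∈ Icc ε M := hgIcc t ⟨ht.le, le_rfl⟩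
  have hf_le : ∀ s ∈ Icc 0 t, |f s| ≤ sSup ((fun s => |f s|) '' Icc 0 t) := fun s hs =>
    le_csSup (isCompact_Icc.image_of_continuousOn hf.abs).bddAbove ⟨s, hs, rfl⟩
  have hkernel : ∀ s ∈ Icc 0 t,
      |exp ((∫ u in (0:ℝ)..s, g u) - ∫ u in (0:ℝ)..t, g u) - exp (g t * (s - t))|
        ≤ exp (ε * (s - t)) - exp (M * (s - t)) := fun s hs =>
    abs_exp_sub_exp_le
      (integral_sub_integral_mem_Icc hs (hg.intervalIntegrable_of_Icc ht.le) hgIcc)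
      ⟨mul_le_mul_of_nonpos_right hgt.2 (by linarith [hs.2]),
        mul_le_mul_of_nonpos_right hgt.1 (by linarith [hs.2])⟩
  calc _ ≤ sSup ((fun s => |f s|) '' Icc 0 t)
          * ∫ s in (0:ℝ)..t, (exp (ε * (s - t)) - exp (M * (s - t))) :=
        abs_integral_mul_le ht.le hf_le hkernel
          ((by fun_prop : Continuous _).intervalIntegrable _ _)
    _ ≤ _ := by
      rw [mul_comm]
      gcongr
      · exact (abs_nonneg _).trans (hf_le 0 ⟨le_rfl, ht.le⟩)
      · exact integral_exp_mul_sub_sub_exp_mul_sub_le hε (hgt.1.trans hgt.2) ht.le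

/-- The kernel-freezing error in the D-QSSA analysis:
`|∫₀ᵗ f(s)·(exp(G(s) - G(t)) - exp(g(t)(s-t))) ds| ≤ (1/ε - 1/M)·max_{[0,t]}|f|`,
where `G(r) = ∫₀ʳ g(u) du` and `ε ≤ g ≤ M` on `[0,t]`. -/
theorem dqssa_kernel_freezing_error_bound
    (t ε M : ℝ) (ht : 0 < t) (hε : 0 < ε) (hεM : ε ≤ M) (f g : ℝ → ℝ)
    (hf : ContinuousOn f (Set.Icc 0 t))
    (hg : ContinuousOn g (Set.Icc 0 t))
    (hgl : ∀ s ∈ Set.Icc (0:ℝ) t, ε ≤ g s)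
    (hgu : ∀ s ∈ Set.Icc (0:ℝ) t, g s ≤ M) :
    |∫ s in (0:ℝ)..t,
        f s * (Real.exp ((∫ u in (0:ℝ)..s, g u) - (∫ u in (0:ℝ)..t, g u))
                - Real.exp (g t * (s - t)))|
      ≤ (1 / ε - 1 / M) * sSup ((fun s => |f s|) '' Set.Icc (0:ℝ) t) :=
  dqssa_kernel_freezing_error_bound_general t ε M ht hε f g hf hg hgl hgu
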